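/- arXiv:2410.12026 — 3 statements merged into one kernel-verified Lean document; each statement's English description precedes it below -/
import Mathlib

section
/- Let U be a convex subset of ℝⁿ, let p_U, a ∈ U, and let p_V ∈ ℝⁿ, and set v = p_U − p_V. If v ≠ 0 and ⟨a, v⟩ ≤ ⟨p_V, v⟩, then the point a' on the segment joining p_U and a that is closest to p_V lies in U and satisfies ‖a' − p_V‖ < ‖p_U − p_V‖, i.e. min over t ∈ [0,1] of ‖(1−t)p_U + t·a − p_V‖ < ‖p_U − p_V‖. -/
open scoped RealInnerProductSpace

/-- Strict-decrease step in the separating axis theorem: if `v = pU - pV ≠ 0` and the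
projection of `a` onto `v` does not exceed that of `pV`, then some point on the segment
from `pU` to `a` (which lies in the convex set `U`) is strictly closer to `pV`. -/
theorem segment_point_strictly_closer {n : ℕ} (U : Set (EuclideanSpace ℝ (Fin n)))
    (hU : Convex ℝ U) (pU a : EuclideanSpace ℝ (Fin n)) (hpU : pU ∈ U) (ha : a ∈ U)
    (pV : EuclideanSpace ℝ (Fin n)) (hv : pU - pV ≠ 0)
    (hproj : ⟪a, pU - pV⟫ ≤ ⟪pV, pU - pV⟫) :
    ∃ t ∈ Set.Icc (0 : ℝ) 1,
      ((1 - t) • pU + t • a) ∈ U ∧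
        ‖(1 - t) • pU + t • a - pV‖ < ‖pU - pV‖ := by
  set v : EuclideanSpace ℝ (Fin n) := pU - pV with hvdef
  set d : EuclideanSpace ℝ (Fin n) := a - pU with hddef
  have hvpos : (0:ℝ) < ‖v‖ ^ 2 := pow_pos (norm_pos_iff.mpr hv) 2
  have hc : ⟪v, d⟫ ≤ -‖v‖ ^ 2 := by
    have h1 : ⟪v, d⟫ = ⟪a, v⟫ - ⟪pU, v⟫ := by
      rw [hddef, inner_sub_right, real_inner_comm v a, real_inner_comm v pU]
    have h2 : ⟪pU, v⟫ - ⟪pV, v⟫ = ‖v‖ ^ 2 := by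
      rw [← inner_sub_left, ← hvdef, real_inner_self_eq_norm_sq]
    linarith
  have hclt : ⟪v, d⟫ < 0 := by linarith
  have hd : d ≠ 0 := by
    intro h
    rw [h, inner_zero_right] at hclt
    exact lt_irrefl 0 hclt
  have hdpos : (0:ℝ) < ‖d‖ ^ 2 := pow_pos (norm_pos_iff.mpr hd) 2
  set t : ℝ := min 1 (-⟪v, d⟫ / ‖d‖ ^ 2) with htdef
  have ht0 : 0 < t := by
    exact lt_min one_pos (div_pos (neg_pos.mpr hclt) hdpos)
  have ht1 : t ≤ 1 := min_le_left _ _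
  have htd : t * ‖d‖ ^ 2 ≤ -⟪v, d⟫ := by
    have := min_le_right 1 (-⟪v, d⟫ / ‖d‖ ^ 2)
    rw [← htdef] at this
    calc t * ‖d‖ ^ 2 ≤ (-⟪v, d⟫ / ‖d‖ ^ 2) * ‖d‖ ^ 2 := by
          exact mul_le_mul_of_nonneg_right this hdpos.le
      _ = -⟪v, d⟫ := by field_simp
  refine ⟨t, ⟨ht0.le, ht1⟩, hU hpU ha (by linarith) ht0.le (by ring), ?_⟩
  have hpt : (1 - t) • pU + t • a - pV = v + t • d := by
    rw [hvdef, hddef]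
    module
  rw [hpt]
  have hsq : ‖v + t • d‖ ^ 2 < ‖v‖ ^ 2 := by
    have := norm_add_sq_real v (t • d)
    rw [inner_smul_right, norm_smul] at this
    rw [Real.norm_eq_abs, abs_of_pos ht0] at this
    nlinarith [hclt, htd, ht0]
  nlinarith [norm_nonneg (v + t • d), norm_nonneg v]
end

section
/- For n = 2 and s = 1 (degree d = 3), the Grundmann–Möller rule on the standard triangle S_2 = {(x,y) : x,y ≥ 0, x+y ≤ 1}, namely Q(p) = 2^{-2}[ (5^3/(0!·5!))·Σ_{perms of (3,1,1)/5} p − (3^3/(1!·4!))·p(1/3,1/3) ], with nodes at the three points whose barycentric coordinates are a permutation of (3/5, 1/5, 1/5), each with weight 25/96, and at the barycenter (1/3, 1/3, 1/3) with weight −9/32, satisfies Q(p) = ∫_{S_2} p for all polynomials p of degree ≤ 3. -/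
open MeasureTheory

private lemma int_poly5 (f : ℝ → ℝ) (c0 c1 c2 c3 c4 : ℝ)
    (hf : ∀ x, f x = c0 + c1 * x + c2 * x ^ 2 + c3 * x ^ 3 + c4 * x ^ 4) :
    ∫ x in (0:ℝ)..1, f x = c0 + c1 / 2 + c2 / 3 + c3 / 4 + c4 / 5 := by
  have h : ∀ x ∈ Set.uIcc (0:ℝ) 1, HasDerivAt
      (fun x : ℝ => c0 * x + c1 * (x ^ 2 / 2) + c2 * (x ^ 3 / 3) + c3 * (x ^ 4 / 4) + c4 * (x ^ 5 / 5))
      (f x) x := by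
    intro x _
    have h2 := (hasDerivAt_pow 2 x).div_const 2
    have h3 := (hasDerivAt_pow 3 x).div_const 3
    have h4 := (hasDerivAt_pow 4 x).div_const 4
    have h5 := (hasDerivAt_pow 5 x).div_const 5
    have := ((((hasDerivAt_id x).const_mul c0).add (h2.const_mul c1)).add
        (h3.const_mul c2)).add (h4.const_mul c3) |>.add (h5.const_mul c4)
    refine this.congr_deriv ?_
    rw [hf x]; push_cast; ring
  rw [intervalIntegral.integral_eq_sub_of_hasDerivAt h]
  · norm_num
    ring
  · apply Continuous.intervalIntegrable
    have : f = fun x => c0 + c1 * x + c2 * x ^ 2 + c3 * x ^ 3 + c4 * x ^ 4 := funext hf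
    rw [this]; fun_prop

private lemma beta_small (a b : ℕ) (h : a + b ≤ 3) :
    ∫ x in (0:ℝ)..1, x ^ a * ((1 - x) ^ (b + 1) / ((b : ℝ) + 1)) =
      (2 : ℝ) ^ (-2 : ℤ) *
        ((5 ^ 3 / ((Nat.factorial 0 : ℝ) * (Nat.factorial 5 : ℝ))) *
            ((1/5 : ℝ) ^ a * (1/5 : ℝ) ^ b + (3/5 : ℝ) ^ a * (1/5 : ℝ) ^ b +
              (1/5 : ℝ) ^ a * (3/5 : ℝ) ^ b) -
          (3 ^ 3 / ((Nat.factorial 1 : ℝ) * (Nat.factorial 4 : ℝ))) *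
            ((1/3 : ℝ) ^ a * (1/3 : ℝ) ^ b)) := by
  have ha : a ≤ 3 := le_trans (Nat.le_add_right a b) h
  interval_cases a <;> (have hb : b ≤ 3 := by omega) <;> interval_cases b <;>
    try (exfalso; omega)
  · rw [int_poly5 _ 1 (-1) 0 0 0 (fun x => by push_cast; ring)]; norm_num [Nat.factorial]
  · rw [int_poly5 _ (1/2) (-1) (1/2) 0 0 (fun x => by push_cast; ring)]; norm_num [Nat.factorial]
  · rw [int_poly5 _ (1/3) (-1) 1 (-1/3) 0 (fun x => by push_cast; ring)]; norm_num [Nat.factorial]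
  · rw [int_poly5 _ (1/4) (-1) (3/2) (-1) (1/4) (fun x => by push_cast; ring)]; norm_num [Nat.factorial]
  · rw [int_poly5 _ 0 1 (-1) 0 0 (fun x => by push_cast; ring)]; norm_num [Nat.factorial]
  · rw [int_poly5 _ 0 (1/2) (-1) (1/2) 0 (fun x => by push_cast; ring)]; norm_num [Nat.factorial]
  · rw [int_poly5 _ 0 (1/3) (-1) 1 (-1/3) (fun x => by push_cast; ring)]; norm_num [Nat.factorial]
  · rw [int_poly5 _ 0 0 1 (-1) 0 (fun x => by push_cast; ring)]; norm_num [Nat.factorial]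
  · rw [int_poly5 _ 0 0 (1/2) (-1) (1/2) (fun x => by push_cast; ring)]; norm_num [Nat.factorial]
  · rw [int_poly5 _ 0 0 0 1 (-1) (fun x => by push_cast; ring)]; norm_num [Nat.factorial]

private lemma key_fubini (a b : ℕ) :
    ∫ z in {z : ℝ × ℝ | 0 ≤ z.1 ∧ 0 ≤ z.2 ∧ z.1 + z.2 ≤ 1}, z.1 ^ a * z.2 ^ b =
      ∫ x in (0:ℝ)..1, x ^ a * ((1 - x) ^ (b + 1) / ((b : ℝ) + 1)) := by
  set T : Set (ℝ × ℝ) := {z : ℝ × ℝ | 0 ≤ z.1 ∧ 0 ≤ z.2 ∧ z.1 + z.2 ≤ 1} with hT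
  set f : ℝ × ℝ → ℝ := fun z => z.1 ^ a * z.2 ^ b with hf
  have hTm : MeasurableSet T := by
    apply MeasurableSet.inter
    · exact measurableSet_le measurable_const measurable_fst
    apply MeasurableSet.inter
    · exact measurableSet_le measurable_const measurable_snd
    · exact measurableSet_le (measurable_fst.add measurable_snd) measurable_const
  have hTclosed : IsClosed T := by
    apply IsClosed.inter
    · exact isClosed_le continuous_const continuous_fst
    apply IsClosed.inter
    · exact isClosed_le continuous_const continuous_snd
    · exact isClosed_le (continuous_fst.add continuous_snd) continuous_const
  have hTc : IsCompact T := by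
    apply IsCompact.of_isClosed_subset (isCompact_Icc (a := ((0:ℝ),(0:ℝ))) (b := (1,1))) hTclosed
    rintro z ⟨h1, h2, h3⟩
    simp only [Set.mem_Icc, Prod.le_def]
    exact ⟨⟨h1, h2⟩, by linarith, by linarith⟩
  have hint : IntegrableOn f T volume :=
    ContinuousOn.integrableOn_compact hTc ((by fun_prop : Continuous f).continuousOn)
  rw [← MeasureTheory.integral_indicator hTm]
  rw [MeasureTheory.Measure.volume_eq_prod]
  rw [MeasureTheory.integral_prod]
  · have hpt : (fun x => ∫ y, T.indicator f (x, y)) =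
        (Set.Icc (0:ℝ) 1).indicator (fun x => ∫ y in Set.Icc 0 (1 - x), f (x, y)) := by
      funext x
      by_cases hx : x ∈ Set.Icc (0:ℝ) 1
      · rw [Set.indicator_of_mem hx]
        rw [← MeasureTheory.integral_indicator measurableSet_Icc]
        congr 1
        funext y
        by_cases hy : y ∈ Set.Icc (0:ℝ) (1 - x)
        · rw [Set.indicator_of_mem hy, Set.indicator_of_mem]
          exact ⟨hx.1, hy.1, by have := hy.2; linarith⟩
        · rw [Set.indicator_of_notMem hy, Set.indicator_of_notMem]
          intro hmem
          exact hy ⟨hmem.2.1, by have := hmem.2.2; linarith⟩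
      · rw [Set.indicator_of_notMem hx]
        have : ∀ y : ℝ, T.indicator f (x, y) = 0 := by
          intro y
          apply Set.indicator_of_notMem
          intro hmem
          simp only [Set.mem_Icc, not_and, not_le] at hx
          rcases le_or_gt 0 x with h0 | h0
          · have := hx h0
            exact absurd hmem.2.2 (by have := hmem.2.1; push_neg; linarith)
          · exact absurd hmem.1 (by push_neg; linarith)
        simp [this]
    rw [hpt, MeasureTheory.integral_indicator measurableSet_Icc]
    have hcong : ∀ x ∈ Set.Icc (0:ℝ) 1,
        (∫ y in Set.Icc 0 (1 - x), f (x, y)) = x ^ a * ((1 - x) ^ (b + 1) / ((b : ℝ) + 1)) := by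
      intro x hx
      rw [MeasureTheory.integral_Icc_eq_integral_Ioc,
        ← intervalIntegral.integral_of_le (by have := hx.2; linarith : (0:ℝ) ≤ 1 - x)]
      simp only [hf]
      rw [intervalIntegral.integral_const_mul, integral_pow]
      norm_num
    rw [MeasureTheory.setIntegral_congr_fun measurableSet_Icc hcong,
      MeasureTheory.integral_Icc_eq_integral_Ioc,
      ← intervalIntegral.integral_of_le (zero_le_one)]
  · rw [← MeasureTheory.Measure.volume_eq_prod]
    exact (MeasureTheory.integrable_indicator_iff hTm).2 hint

private lemma triangle_isCompact :
    IsCompact {z : ℝ × ℝ | 0 ≤ z.1 ∧ 0 ≤ z.2 ∧ z.1 + z.2 ≤ 1} := by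
  have hTclosed : IsClosed {z : ℝ × ℝ | 0 ≤ z.1 ∧ 0 ≤ z.2 ∧ z.1 + z.2 ≤ 1} := by
    apply IsClosed.inter
    · exact isClosed_le continuous_const continuous_fst
    apply IsClosed.inter
    · exact isClosed_le continuous_const continuous_snd
    · exact isClosed_le (continuous_fst.add continuous_snd) continuous_const
  apply IsCompact.of_isClosed_subset (isCompact_Icc (a := ((0:ℝ),(0:ℝ))) (b := (1,1))) hTclosed
  rintro z ⟨h1, h2, h3⟩
  simp only [Set.mem_Icc, Prod.le_def]
  exact ⟨⟨h1, h2⟩, by linarith, by linarith⟩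

private lemma triangle_integrableOn (c : ℝ) (a b : ℕ) :
    IntegrableOn (fun z : ℝ × ℝ => c * (z.1 ^ a * z.2 ^ b))
      {z : ℝ × ℝ | 0 ≤ z.1 ∧ 0 ≤ z.2 ∧ z.1 + z.2 ≤ 1} volume :=
  ContinuousOn.integrableOn_compact triangle_isCompact
    ((by fun_prop : Continuous fun z : ℝ × ℝ => c * (z.1 ^ a * z.2 ^ b)).continuousOn)

/-- The two-dimensional degree-3 (n = 2, s = 1) Grundmann–Möller rule on the standard
triangle: the nodes are the three points with barycentric coordinates the permutations of
`(3/5, 1/5, 1/5)` (w.r.t. vertices `(0,0)`, `(1,0)`, `(0,1)`, giving Cartesian points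
`(1/5,1/5)`, `(3/5,1/5)`, `(1/5,3/5)`) and the barycenter `(1/3,1/3)`, with the
Grundmann–Möller weights; the rule is exact for polynomials of total degree ≤ 3. -/
theorem gm_rule_dim2_deg3 (p : MvPolynomial (Fin 2) ℝ) (hp : p.totalDegree ≤ 3) :
    (2 : ℝ) ^ (-2 : ℤ) *
        ((5 ^ 3 / ((Nat.factorial 0 : ℝ) * (Nat.factorial 5 : ℝ))) *
            (MvPolynomial.eval ![1 / 5, 1 / 5] p + MvPolynomial.eval ![3 / 5, 1 / 5] p +
              MvPolynomial.eval ![1 / 5, 3 / 5] p) -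
          (3 ^ 3 / ((Nat.factorial 1 : ℝ) * (Nat.factorial 4 : ℝ))) *
            MvPolynomial.eval ![1 / 3, 1 / 3] p) =
      ∫ z in {z : ℝ × ℝ | 0 ≤ z.1 ∧ 0 ≤ z.2 ∧ z.1 + z.2 ≤ 1},
        MvPolynomial.eval ![z.1, z.2] p := by
  conv_lhs => rw [MvPolynomial.as_sum p]
  conv_rhs => rw [MvPolynomial.as_sum p]
  simp only [map_sum, MvPolynomial.eval_monomial, Finsupp.prod_pow, Fin.prod_univ_two,
    Matrix.cons_val_zero, Matrix.cons_val_one, Matrix.head_cons]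
  rw [MeasureTheory.integral_finset_sum _ (fun v _ => triangle_integrableOn _ _ _)]
  rw [← Finset.sum_add_distrib, ← Finset.sum_add_distrib, Finset.mul_sum, Finset.mul_sum,
    ← Finset.sum_sub_distrib, Finset.mul_sum]
  refine Finset.sum_congr rfl fun v hv => ?_
  have hd : v 0 + v 1 ≤ 3 := by
    have h1 := MvPolynomial.le_totalDegree (p := p) (s := v) hv
    have h2 : (v.sum fun _ e => e) = v 0 + v 1 := by
      rw [Finsupp.sum_fintype _ _ (fun _ => rfl), Fin.sum_univ_two]
    omega
  rw [MeasureTheory.integral_const_mul, key_fubini, beta_small _ _ hd]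
  ring
end

section
/- Monotonicity of the Grundmann–Möller error factor in dimension: for fixed odd degree d = 2s+1, the error factor E(n,d) = 1 + n!·Σ_{i=0}^{s} [2^{1−d}(d−2i+n)^d / (i!(d−i+n)!)]·C(n+s−i, n) is strictly increasing in n, and E(n,d) = (1/s!)(n/2)^s + O(n^{s−1}) as n → ∞. -/
open Asymptotics Filter
open Finset

namespace GMaux

lemma pow_lower (a m : ℕ) : a^(m+2) + (m+2)*a^(m+1) + 1 ≤ (a+1)^(m+2) := by
  induction m with
  | zero => simp only [Nat.zero_add]; nlinarith [sq_nonneg a]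
  | succ m ih =>
    have h : (a^(m+2) + (m+2)*a^(m+1) + 1)*(a+1)
        = a^(m+3) + (m+3)*a^(m+2) + 1 + ((m+2)*a^(m+1) + a) := by ring
    calc a^(m+3) + (m+3)*a^(m+2) + 1
        ≤ (a^(m+2) + (m+2)*a^(m+1) + 1)*(a+1) := by rw [h]; omega
      _ ≤ (a+1)^(m+2)*(a+1) := Nat.mul_le_mul ih (le_refl _)
      _ = (a+1)^(m+3) := by ring

lemma key (s a b : ℕ) (hs : 1 ≤ s) (hb : 1 ≤ b) (h : (s+1)*a ≤ (2*s+1)*b) :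
    a^(2*s+1)*(b+s+1) < (a+1)^(2*s+1)*b := by
  obtain ⟨t, rfl⟩ : ∃ t, s = t+1 := ⟨s-1, by omega⟩
  have e : 2*(t+1)+1 = 2*t+3 := by ring
  rw [e] at h ⊢
  have h1 : a^(2*t+3) + (2*t+3)*a^(2*t+2) + 1 ≤ (a+1)^(2*t+3) := pow_lower a (2*t+1)
  have h2 : (t+2)*a * a^(2*t+2) ≤ (2*t+3)*b * a^(2*t+2) :=
    Nat.mul_le_mul h (le_refl _)
  calc a^(2*t+3)*(b+(t+1)+1)
      = a^(2*t+3)*b + (t+2)*a * a^(2*t+2) := by ring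
    _ ≤ a^(2*t+3)*b + (2*t+3)*b * a^(2*t+2) := by omega
    _ < a^(2*t+3)*b + (2*t+3)*b * a^(2*t+2) + b := by omega
    _ = (a^(2*t+3) + (2*t+3)*a^(2*t+2) + 1) * b := by ring
    _ ≤ (a+1)^(2*t+3)*b := Nat.mul_le_mul h1 (le_refl _)

lemma factorial_add_prod (a c : ℕ) :
    (a+c).factorial = a.factorial * ∏ j ∈ range c, (a+1+j) := by
  induction c with
  | zero => simp
  | succ c ih =>
    rw [show a+(c+1) = (a+c)+1 from rfl, Nat.factorial_succ, ih, prod_range_succ]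
    ring

end GMaux

namespace GMaux
open Polynomial

noncomputable def gmT (s i n : ℕ) : ℝ :=
  ((n + 2*(s-i) + 1 : ℕ) : ℝ)^(2*s+1) * ((n + (s-i)).factorial : ℝ) /
  ((2:ℝ)^(2*s) * (i.factorial : ℝ) * ((s-i).factorial : ℝ) *
    ((n + (s-i) + s + 1).factorial : ℝ))

lemma poly_bound (p : ℝ[X]) (N : ℕ) (hN : p.natDegree ≤ N) :
    ∃ C : ℝ, 0 ≤ C ∧ ∀ x : ℝ, 1 ≤ x → |p.eval x| ≤ C * x^N := by
  refine ⟨∑ j ∈ range (N+1), |p.coeff j|,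
    Finset.sum_nonneg fun j _ => abs_nonneg _, fun x hx => ?_⟩
  have hx0 : (0:ℝ) ≤ x := by linarith
  rw [eval_eq_sum_range' (Nat.lt_succ_of_le hN)]
  calc |∑ j ∈ range (N+1), p.coeff j * x^j|
      ≤ ∑ j ∈ range (N+1), |p.coeff j * x^j| := Finset.abs_sum_le_sum_abs _ _
    _ ≤ ∑ j ∈ range (N+1), |p.coeff j| * x^N := by
        apply Finset.sum_le_sum; intro j hj
        rw [abs_mul, abs_pow, abs_of_nonneg hx0]
        exact mul_le_mul_of_nonneg_left
          (pow_le_pow_right₀ hx (Nat.lt_succ_iff.mp (mem_range.mp hj))) (abs_nonneg _)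
    _ = _ := by rw [← Finset.sum_mul]

lemma D_natDegree (s k : ℕ) :
    ((X + C ((2*k+1 : ℕ):ℝ))^(2*s+1)
      - X^s * ∏ j ∈ range (s+1), (X + C ((k+1+j : ℕ):ℝ))).natDegree ≤ 2*s := by
  set P1 : ℝ[X] := (X + C ((2*k+1 : ℕ):ℝ))^(2*s+1) with hP1
  set P2 : ℝ[X] := X^s * ∏ j ∈ range (s+1), (X + C ((k+1+j : ℕ):ℝ)) with hP2
  have hm1 : P1.Monic := (monic_X_add_C _).pow _
  have hmp : (∏ j ∈ range (s+1), (X + C ((k+1+j : ℕ):ℝ))).Monic :=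
    monic_prod_of_monic _ _ fun j _ => monic_X_add_C _
  have hm2 : P2.Monic := (monic_X_pow s).mul hmp
  have hd1 : P1.natDegree = 2*s+1 := by
    rw [hP1, natDegree_pow, natDegree_X_add_C, mul_one]
  have hdp : (∏ j ∈ range (s+1), (X + C ((k+1+j : ℕ):ℝ))).natDegree = s+1 := by
    rw [natDegree_prod _ _ fun j _ => (monic_X_add_C _).ne_zero,
      Finset.sum_congr rfl fun j _ => natDegree_X_add_C _]
    simp
  have hd2 : P2.natDegree = 2*s+1 := by
    rw [hP2, natDegree_mul (monic_X_pow s).ne_zero hmp.ne_zero, natDegree_X_pow, hdp]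
    omega
  by_cases hD : P1 - P2 = 0
  · simp [hD]
  · have hdeg : (P1 - P2).degree < P1.degree := by
      apply degree_sub_lt _ hm1.ne_zero (by rw [hm1.leadingCoeff, hm2.leadingCoeff])
      rw [degree_eq_natDegree hm1.ne_zero, degree_eq_natDegree hm2.ne_zero, hd1, hd2]
    have := natDegree_lt_natDegree hD hdeg
    omega

end GMaux

namespace GMaux

lemma term_eq (s i n : ℕ) (hi : i ≤ s) :
    (n.factorial : ℝ) * ((2:ℝ)^((1:ℤ) - (2*s+1 : ℕ)) *
        ((2*s+1 : ℝ) - 2*i + n)^(2*s+1) /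
        ((i.factorial : ℝ) * (((2*s+1-i+n).factorial : ℕ) : ℝ)) *
        ((Nat.choose (n+s-i) n : ℕ) : ℝ)) = gmT s i n := by
  have h2 : (2:ℝ)^((1:ℤ) - (2*s+1 : ℕ)) = ((2:ℝ)^(2*s))⁻¹ := by
    have e : ((1:ℤ) - (2*s+1 : ℕ)) = -(2*s : ℕ) := by push_cast; ring
    rw [e, zpow_neg, zpow_natCast]
  have hb : ((2*s+1 : ℝ) - 2*i + n) = ((n + 2*(s-i) + 1 : ℕ) : ℝ) := by
    push_cast [Nat.cast_sub hi]; ring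
  have hf : (2*s+1-i+n) = (n + (s-i) + s + 1) := by omega
  have hc : (n+s-i) = n + (s-i) := by omega
  rw [h2, hb, hf, hc]
  unfold gmT
  set A : ℝ := ((n + 2*(s-i) + 1 : ℕ) : ℝ) with hA
  have hch : (((n + (s-i)).choose n : ℕ) : ℝ) * (n.factorial : ℝ) * ((s-i).factorial : ℝ)
      = ((n + (s-i)).factorial : ℝ) := by
    exact_mod_cast congrArg (Nat.cast (R := ℝ)) <| by
      have := Nat.choose_mul_factorial_mul_factorial (Nat.le_add_right n (s-i))
      rwa [Nat.add_sub_cancel_left] at this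
  have h1 : (0:ℝ) < (2:ℝ)^(2*s) := by positivity
  have h2' : (0:ℝ) < (i.factorial : ℝ) := by exact_mod_cast i.factorial_pos
  have h3 : (0:ℝ) < ((s-i).factorial : ℝ) := by exact_mod_cast (s-i).factorial_pos
  have h4 : (0:ℝ) < ((n + (s-i) + s + 1).factorial : ℝ) := by
    exact_mod_cast (n + (s-i) + s + 1).factorial_pos
  set F1 : ℝ := ((n + (s-i)).factorial : ℝ) with hF1
  set F2 : ℝ := ((n + (s-i) + s + 1).factorial : ℝ) with hF2
  set Ch : ℝ := (((n + (s-i)).choose n : ℕ) : ℝ) with hCh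
  set Fi : ℝ := (i.factorial : ℝ) with hFi
  set Fk : ℝ := ((s-i).factorial : ℝ) with hFk
  set Fn : ℝ := (n.factorial : ℝ) with hFn
  field_simp
  linear_combination A^(2*s+1) * hch

end GMaux

namespace GMaux

lemma gmT_mono (s i n : ℕ) (hs : 1 ≤ s) (hi : i ≤ s) : gmT s i n < gmT s i (n+1) := by
  unfold gmT
  set k := s - i with hk
  have hkle : k ≤ s := by omega
  rw [div_lt_div_iff₀ (by positivity) (by positivity)]
  have core : (n+2*k+1)^(2*s+1) * ((n+k+1)+s+1) < ((n+2*k+1)+1)^(2*s+1) * (n+k+1) :=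
    key s (n+2*k+1) (n+k+1) hs (by omega) (by nlinarith [Nat.zero_le (s*n)])
  have natineq : (n+2*k+1)^(2*s+1) * (n+k).factorial *
        (2^(2*s) * i.factorial * k.factorial * ((n+1+k+s+1).factorial))
      < (n+1+2*k+1)^(2*s+1) * ((n+1+k).factorial) *
        (2^(2*s) * i.factorial * k.factorial * ((n+k+s+1).factorial)) := by
    rw [show n+1+k = (n+k)+1 from by omega, show (n+k)+1+s+1 = (n+k+s+1)+1 from by omega,
      show n+1+2*k+1 = (n+2*k+1)+1 from by omega, Nat.factorial_succ, Nat.factorial_succ]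
    have hpos : 0 < (n+k).factorial * (2^(2*s) * i.factorial * k.factorial *
        (n+k+s+1).factorial) :=
      Nat.mul_pos (Nat.factorial_pos _) (Nat.mul_pos (Nat.mul_pos (Nat.mul_pos
        (Nat.pow_pos (by omega)) i.factorial_pos) k.factorial_pos)
        (Nat.factorial_pos _))
    calc (n+2*k+1)^(2*s+1) * (n+k).factorial *
          (2^(2*s) * i.factorial * k.factorial * ((n+k+s+1+1) * (n+k+s+1).factorial))
        = ((n+2*k+1)^(2*s+1) * ((n+k+1)+s+1)) *
          ((n+k).factorial * (2^(2*s) * i.factorial * k.factorial *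
            (n+k+s+1).factorial)) := by ring
      _ < (((n+2*k+1)+1)^(2*s+1) * (n+k+1)) *
          ((n+k).factorial * (2^(2*s) * i.factorial * k.factorial *
            (n+k+s+1).factorial)) := by
          exact Nat.mul_lt_mul_of_lt_of_le core (le_refl _) hpos
      _ = ((n+2*k+1)+1)^(2*s+1) * ((n+k+1) * (n+k).factorial) *
          (2^(2*s) * i.factorial * k.factorial * (n+k+s+1).factorial) := by ring
  exact_mod_cast natineq

end GMaux

namespace GMaux
open Polynomial Asymptotics Filter

lemma term_isBigO (s i : ℕ) (hs : 1 ≤ s) (hi : i ≤ s) :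
    (fun n : ℕ => gmT s i n -
        (1/((2:ℝ)^(2*s) * (i.factorial : ℝ) * ((s-i).factorial : ℝ))) * (n:ℝ)^s)
      =O[atTop] (fun n : ℕ => (n:ℝ)^(s-1)) := by
  set k := s - i with hk
  obtain ⟨CC, hC0, hC⟩ := poly_bound _ (2*s) (D_natDegree s k)
  set c2 : ℝ := (2:ℝ)^(2*s) * (i.factorial : ℝ) * (k.factorial : ℝ) with hc2def
  have hc2 : (0:ℝ) < c2 := by positivity
  apply IsBigO.of_bound (CC / c2)
  filter_upwards [eventually_ge_atTop 1] with n hn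
  have hn1 : (1:ℝ) ≤ (n:ℝ) := by exact_mod_cast hn
  have hn0 : (0:ℝ) < (n:ℝ) := by linarith
  set Q : ℝ := ∏ j ∈ Finset.range (s+1), ((n+k+1+j : ℕ) : ℝ) with hQdef
  have hQpos : (0:ℝ) < Q := Finset.prod_pos fun j _ => by positivity
  have hQn : (n:ℝ)^(s+1) ≤ Q := by
    rw [hQdef]
    calc (n:ℝ)^(s+1) = ∏ _j ∈ Finset.range (s+1), (n:ℝ) := by
          rw [Finset.prod_const, Finset.card_range]
      _ ≤ _ := Finset.prod_le_prod (fun j _ => by positivity)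
          (fun j _ => by exact_mod_cast Nat.le_add_right n (k+1+j) |>.trans (by omega))
  have hQfac : ((n + k + s + 1).factorial : ℝ) = ((n+k).factorial : ℝ) * Q := by
    rw [show n+k+s+1 = n+k+(s+1) from by omega, factorial_add_prod, Nat.cast_mul,
      Nat.cast_prod, ← hQdef]
  have heval : ((X + Polynomial.C ((2*k+1 : ℕ):ℝ))^(2*s+1)
      - X^s * ∏ j ∈ Finset.range (s+1), (X + Polynomial.C ((k+1+j : ℕ):ℝ))).eval (n:ℝ)
      = ((n + 2*k + 1 : ℕ):ℝ)^(2*s+1) - (n:ℝ)^s * Q := by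
    simp only [eval_sub, eval_pow, eval_mul, eval_add, eval_X, eval_C, eval_prod]
    rw [Finset.prod_congr rfl (fun j (_ : j ∈ Finset.range (s+1)) =>
        show (n:ℝ) + ((k+1+j:ℕ):ℝ) = ((n+k+1+j:ℕ):ℝ) by push_cast; ring), ← hQdef,
      show ((n:ℝ) + ((2*k+1:ℕ):ℝ)) = ((n+2*k+1:ℕ):ℝ) by push_cast; ring]
  have hgm : gmT s i n - (1/c2) * (n:ℝ)^s
      = (((n + 2*k + 1 : ℕ):ℝ)^(2*s+1) - (n:ℝ)^s * Q) / (c2 * Q) := by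
    unfold gmT
    rw [← hk, hQfac]
    have hF : (0:ℝ) < ((n+k).factorial : ℝ) := by exact_mod_cast (n+k).factorial_pos
    field_simp
    ring
  rw [hgm, ← heval]
  have habs := hC _ hn1
  have hpow : (n:ℝ)^(2*s) = (n:ℝ)^(s+1) * (n:ℝ)^(s-1) := by
    rw [← pow_add]; congr 1; omega
  rw [Real.norm_eq_abs, Real.norm_eq_abs, abs_div,
    abs_of_pos (by positivity : (0:ℝ) < c2 * Q),
    abs_of_nonneg (by positivity : (0:ℝ) ≤ (n:ℝ)^(s-1))]
  calc _ / (c2 * Q) ≤ (CC * (n:ℝ)^(2*s)) / (c2 * (n:ℝ)^(s+1)) := by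
        apply div_le_div₀ (by positivity) habs (by positivity)
        exact mul_le_mul_of_nonneg_left hQn (le_of_lt hc2)
    _ = CC / c2 * (n:ℝ)^(s-1) := by
        rw [hpow]; field_simp
end GMaux

namespace GMaux
open Asymptotics Filter

lemma coeff_sum (s : ℕ) :
    ∑ i ∈ Finset.range (s+1),
        (1:ℝ)/((2:ℝ)^(2*s) * (i.factorial : ℝ) * ((s-i).factorial : ℝ))
      = 1/((s.factorial : ℝ) * 2^s) := by
  have h : ∀ i ∈ Finset.range (s+1),
      (1:ℝ)/((2:ℝ)^(2*s) * (i.factorial : ℝ) * ((s-i).factorial : ℝ))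
        = (s.choose i : ℝ) / ((s.factorial : ℝ) * 2^(2*s)) := by
    intro i hi
    have hi' : i ≤ s := by
      have := Finset.mem_range.mp hi; omega
    have hcf : (s.choose i : ℝ) * (i.factorial : ℝ) * ((s-i).factorial : ℝ)
        = (s.factorial : ℝ) := by
      exact_mod_cast congrArg (Nat.cast (R := ℝ))
        (Nat.choose_mul_factorial_mul_factorial hi')
    have h1 : (0:ℝ) < (i.factorial : ℝ) := by exact_mod_cast i.factorial_pos
    have h2 : (0:ℝ) < ((s-i).factorial : ℝ) := by exact_mod_cast (s-i).factorial_pos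
    have h3 : (0:ℝ) < (s.factorial : ℝ) := by exact_mod_cast s.factorial_pos
    rw [div_eq_div_iff (by positivity) (by positivity)]
    linear_combination -(2:ℝ)^(2*s) * hcf
  rw [Finset.sum_congr rfl h, ← Finset.sum_div, ← Nat.cast_sum, Nat.sum_range_choose]
  have h3 : (0:ℝ) < (s.factorial : ℝ) := by exact_mod_cast s.factorial_pos
  rw [div_eq_div_iff (by positivity) (by positivity)]
  push_cast
  rw [show 2*s = s + s from by omega, pow_add]
  ring

end GMaux



open GMaux

/-- The Grundmann–Möller error factor
`E(n,d) = 1 + n!·Σ_{i=0}^{s} 2^{1−d}(d−2i+n)^d/(i!(d−i+n)!)·C(n+s−i, n)` with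
`d = 2s+1` is strictly increasing in the dimension `n`, and
`E(n,d) = (1/s!)(n/2)^s + O(n^{s−1})` as `n → ∞`. -/
theorem gm_error_factor_monotone_and_asymptotic (s : ℕ) (hs : 1 ≤ s) :
    (∀ n : ℕ, (fun n : ℕ => 1 + (n.factorial : ℝ) *
        ∑ i ∈ Finset.range (s + 1),
          (2 : ℝ) ^ ((1 : ℤ) - (2 * s + 1 : ℕ)) *
            ((2 * s + 1 : ℝ) - 2 * i + n) ^ (2 * s + 1) /
              ((i.factorial : ℝ) * ((2 * s + 1 - i + n).factorial : ℝ)) *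
            (Nat.choose (n + s - i) n : ℝ)) n <
      (fun n : ℕ => 1 + (n.factorial : ℝ) *
        ∑ i ∈ Finset.range (s + 1),
          (2 : ℝ) ^ ((1 : ℤ) - (2 * s + 1 : ℕ)) *
            ((2 * s + 1 : ℝ) - 2 * i + n) ^ (2 * s + 1) /
              ((i.factorial : ℝ) * ((2 * s + 1 - i + n).factorial : ℝ)) *
            (Nat.choose (n + s - i) n : ℝ)) (n + 1)) ∧
    (fun n : ℕ => (1 + (n.factorial : ℝ) *
        ∑ i ∈ Finset.range (s + 1),
          (2 : ℝ) ^ ((1 : ℤ) - (2 * s + 1 : ℕ)) *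
            ((2 * s + 1 : ℝ) - 2 * i + n) ^ (2 * s + 1) /
              ((i.factorial : ℝ) * ((2 * s + 1 - i + n).factorial : ℝ)) *
            (Nat.choose (n + s - i) n : ℝ)) -
        (1 / (s.factorial : ℝ)) * ((n : ℝ) / 2) ^ s) =O[atTop]
      (fun n : ℕ => (n : ℝ) ^ (s - 1)) := by
  have hrw : ∀ n : ℕ, (n.factorial : ℝ) *
      ∑ i ∈ Finset.range (s + 1),
        (2 : ℝ) ^ ((1 : ℤ) - (2 * s + 1 : ℕ)) *
          ((2 * s + 1 : ℝ) - 2 * i + n) ^ (2 * s + 1) /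
            ((i.factorial : ℝ) * ((2 * s + 1 - i + n).factorial : ℝ)) *
          (Nat.choose (n + s - i) n : ℝ)
      = ∑ i ∈ Finset.range (s + 1), gmT s i n := by
    intro n
    rw [Finset.mul_sum]
    refine Finset.sum_congr rfl fun i hi => ?_
    exact term_eq s i n (by have := Finset.mem_range.mp hi; omega)
  constructor
  · intro n
    simp only [hrw]
    apply add_lt_add_right
    refine Finset.sum_lt_sum_of_nonempty Finset.nonempty_range_add_one fun i hi => ?_
    exact gmT_mono s i n hs (by have := Finset.mem_range.mp hi; omega)
  · have hfun : (fun n : ℕ => (1 + (n.factorial : ℝ) *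
        ∑ i ∈ Finset.range (s + 1),
          (2 : ℝ) ^ ((1 : ℤ) - (2 * s + 1 : ℕ)) *
            ((2 * s + 1 : ℝ) - 2 * i + n) ^ (2 * s + 1) /
              ((i.factorial : ℝ) * ((2 * s + 1 - i + n).factorial : ℝ)) *
            (Nat.choose (n + s - i) n : ℝ)) -
        (1 / (s.factorial : ℝ)) * ((n : ℝ) / 2) ^ s)
        = fun n : ℕ => 1 + ∑ i ∈ Finset.range (s + 1),
            (gmT s i n - (1/((2:ℝ)^(2*s) * (i.factorial : ℝ) * ((s-i).factorial : ℝ)))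
              * (n:ℝ)^s) := by
      funext n
      rw [hrw n, Finset.sum_sub_distrib, ← Finset.sum_mul, coeff_sum s, div_pow]
      have h3 : (0:ℝ) < (s.factorial : ℝ) := by exact_mod_cast s.factorial_pos
      field_simp
      ring
    rw [hfun]
    have h1 : (fun _ : ℕ => (1:ℝ)) =O[atTop] (fun n : ℕ => (n:ℝ)^(s-1)) := by
      apply IsBigO.of_bound 1
      filter_upwards [eventually_ge_atTop 1] with n hn
      have hn1 : (1:ℝ) ≤ (n:ℝ) := by exact_mod_cast hn
      have : (1:ℝ) ≤ (n:ℝ)^(s-1) := one_le_pow₀ hn1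
      rw [norm_one, Real.norm_eq_abs, abs_of_nonneg (by positivity)]
      linarith
    exact h1.add (IsBigO.fun_sum fun i hi =>
      term_isBigO s i hs (by have := Finset.mem_range.mp hi; omega))
end
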